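/- arXiv:1301.5300 — 2 statements merged into one kernel-verified Lean document; each statement's English description precedes it below -/
import Mathlib

section
/- Let $t>0$, $p\in[1,\infty)$, $E$ a Banach space, $g\in L^p(-1,t;E)$, and let $y(s)(\theta)=g(s+\theta)$ denote the segments. Then the Bochner integral $\int_0^t y(s)\,ds$, taken in $L^p(-1,0;E)$, belongs to $W^{1,p}(-1,0;E)$ and its weak derivative satisfies $\frac{d}{d\theta}\int_0^t y(s)\,ds = y(t)-y(0)$ almost everywhere on $(-1,0)$. -/
open MeasureTheory Set Convolution
open scoped ENNReal

lemma ae_comp_add_right' {P : ℝ → Prop} (h : ∀ᵐ x, P x) (c : ℝ) : ∀ᵐ x, P (x + c) := by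
  rw [ae_iff] at h ⊢
  have : {x : ℝ | ¬ P (x + c)} = (fun x => x + c) ⁻¹' {x | ¬ P x} := rfl
  rw [this, measure_preimage_add_right]
  exact h

lemma ae_comp_add_left' {P : ℝ → Prop} (h : ∀ᵐ x, P x) (c : ℝ) : ∀ᵐ x, P (c + x) := by
  rw [ae_iff] at h ⊢
  have : {x : ℝ | ¬ P (c + x)} = (fun x => c + x) ⁻¹' {x | ¬ P x} := rfl
  rw [this, measure_preimage_add]
  exact h

lemma conv_ibp {E : Type*} [NormedAddCommGroup E] [NormedSpace ℝ E] [CompleteSpace E]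
    (t : ℝ) (G : ℝ → E) (hGint : Integrable G volume)
    (φ : ℝ → ℝ) (hφ : ContDiff ℝ (⊤ : ℕ∞) φ) (hφs : HasCompactSupport φ) :
    ∫ s in (0:ℝ)..t, (∫ θ, deriv φ θ • G (s + θ)) = (∫ θ, φ θ • G θ) - ∫ θ, φ θ • G (t + θ) := by
  set L : ℝ →L[ℝ] E →L[ℝ] E := ContinuousLinearMap.lsmul ℝ ℝ with hL
  set φn : ℝ → ℝ := fun x => φ (-x) with hφn
  have hφn_cd : ContDiff ℝ 1 φn := (hφ.comp contDiff_neg).of_le (by simp)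
  have hφn_supp : HasCompactSupport φn := hφs.comp_homeomorph (Homeomorph.neg ℝ)
  have hGloc : LocallyIntegrable G volume := hGint.locallyIntegrable
  have hK : ∀ x : ℝ, HasDerivAt (φn ⋆[L] G) ((deriv φn ⋆[L] G) x) x := fun x =>
    hφn_supp.hasDerivAt_convolution_left L hφn_cd hGloc x
  have hK'c : Continuous (deriv φn ⋆[L] G) :=
    (hφn_supp.deriv).continuous_convolution_left L (hφn_cd.continuous_deriv le_rfl) hGloc
  have hftc : ∫ s in (0:ℝ)..t, (deriv φn ⋆[L] G) s
      = (φn ⋆[L] G) t - (φn ⋆[L] G) 0 :=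
    intervalIntegral.integral_eq_sub_of_hasDerivAt (fun x _ => hK x)
      (hK'c.intervalIntegrable 0 t)
  have hKval : ∀ s : ℝ, (φn ⋆[L] G) s = ∫ θ, φ θ • G (s + θ) := by
    intro s
    rw [convolution_def]
    rw [← integral_neg_eq_self (fun θ => φ θ • G (s + θ)) volume]
    refine integral_congr_ae (Filter.Eventually.of_forall fun u => ?_)
    simp [hL, hφn, sub_eq_add_neg]
  have hK'val : ∀ s : ℝ, (deriv φn ⋆[L] G) s = -∫ θ, deriv φ θ • G (s + θ) := by
    intro s
    rw [convolution_def]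
    rw [← integral_neg_eq_self (fun θ => deriv φ θ • G (s + θ)) volume]
    rw [← integral_neg]
    refine integral_congr_ae (Filter.Eventually.of_forall fun u => ?_)
    simp [hL, hφn, deriv_comp_neg, sub_eq_add_neg]
  have heq : ∫ s in (0:ℝ)..t, (deriv φn ⋆[L] G) s
      = ∫ s in (0:ℝ)..t, -∫ θ, deriv φ θ • G (s + θ) := by
    simp_rw [hK'val]
  rw [heq, intervalIntegral.integral_neg] at hftc
  have h2 := neg_eq_iff_eq_neg.mp hftc
  rw [h2, hKval, hKval]
  simp [neg_sub]

lemma swap_smul {E : Type*} [NormedAddCommGroup E] [NormedSpace ℝ E] [CompleteSpace E]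
    (t : ℝ) (G : ℝ → E) (hGsm : StronglyMeasurable G) (hGint : Integrable G volume)
    (ψ : ℝ → ℝ) (hψc : Continuous ψ) (hψs : HasCompactSupport ψ) :
    ∫ θ, ψ θ • (∫ s in Ioo (0:ℝ) t, G (s + θ)) = ∫ s in Ioo (0:ℝ) t, (∫ θ, ψ θ • G (s + θ)) := by
  have hψint : Integrable ψ volume := hψc.integrable_of_hasCompactSupport hψs
  set B : ℝ≥0∞ := ∫⁻ x, ‖G x‖₊ ∂volume with hB
  have hBlt : B < ∞ := hGint.hasFiniteIntegral
  have hmeas : AEStronglyMeasurable (Function.uncurry fun θ s => ψ θ • G (s + θ))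
      (volume.prod (volume.restrict (Ioo (0:ℝ) t))) := by
    exact ((hψc.stronglyMeasurable.comp_measurable measurable_fst).smul
      (hGsm.comp_measurable (measurable_snd.add measurable_fst))).aestronglyMeasurable
  have hint : Integrable (Function.uncurry fun θ s => ψ θ • G (s + θ))
      (volume.prod (volume.restrict (Ioo (0:ℝ) t))) := by
    refine ⟨hmeas, ?_⟩
    rw [hasFiniteIntegral_def]
    rw [lintegral_prod _ hmeas.enorm]
    have hb : ∀ θ : ℝ, (∫⁻ s in Ioo (0:ℝ) t, ‖(Function.uncurry fun θ s => ψ θ • G (s + θ)) (θ, s)‖₊)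
        ≤ ‖ψ θ‖₊ * B := by
      intro θ
      have h1 : (∫⁻ s in Ioo (0:ℝ) t, ‖(Function.uncurry fun θ s => ψ θ • G (s + θ)) (θ, s)‖₊)
          = ∫⁻ s in Ioo (0:ℝ) t, (‖ψ θ‖₊ : ℝ≥0∞) * ‖G (s + θ)‖₊ := by
        simp [Function.uncurry, nnnorm_smul, ENNReal.coe_mul]
      rw [h1, lintegral_const_mul' _ _ ENNReal.coe_ne_top]
      have h2 : (∫⁻ s in Ioo (0:ℝ) t, (‖G (s + θ)‖₊ : ℝ≥0∞)) ≤ ∫⁻ s, (‖G (s + θ)‖₊ : ℝ≥0∞) :=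
        lintegral_mono' Measure.restrict_le_self le_rfl
      have h3 : (∫⁻ s, (‖G (s + θ)‖₊ : ℝ≥0∞)) = B :=
        lintegral_add_right_eq_self (fun x => (‖G x‖₊ : ℝ≥0∞)) θ
      exact mul_le_mul_right (h3 ▸ h2) _
    calc (∫⁻ θ, ∫⁻ s in Ioo (0:ℝ) t, ‖(Function.uncurry fun θ s => ψ θ • G (s + θ)) (θ, s)‖₊)
        ≤ ∫⁻ θ, ‖ψ θ‖₊ * B := lintegral_mono hb
      _ = (∫⁻ θ, ‖ψ θ‖₊) * B := lintegral_mul_const' B _ hBlt.ne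
      _ < ∞ := ENNReal.mul_lt_top hψint.hasFiniteIntegral hBlt
  calc ∫ θ, ψ θ • (∫ s in Ioo (0:ℝ) t, G (s + θ))
      = ∫ θ, ∫ s in Ioo (0:ℝ) t, ψ θ • G (s + θ) := by simp_rw [integral_smul]
    _ = ∫ s in Ioo (0:ℝ) t, (∫ θ, ψ θ • G (s + θ)) := integral_integral_swap hint

/-- The integrated segment `I(θ) = ∫_0^t y(s)(θ) ds = ∫_0^t g(s+θ) ds` belongs to
`W^{1,p}(-1,0;E)` with weak derivative `y(t) - y(0)`, i.e. both `I` and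
`θ ↦ g(t+θ) - g(θ)` are in `L^p(-1,0;E)` and the weak derivative identity
(tested against smooth functions compactly supported in `(-1,0)`) holds. -/
theorem integrated_segment_mem_W1p
    {E : Type*} [NormedAddCommGroup E] [NormedSpace ℝ E] [CompleteSpace E]
    (t : ℝ) (ht : 0 < t) (p : ℝ≥0∞) (hp : 1 ≤ p) (hp' : p ≠ ∞)
    (g : ℝ → E) (hg : MemLp g p (volume.restrict (Ioo (-1 : ℝ) t))) :
    MemLp (fun θ => ∫ s in Ioo (0 : ℝ) t, g (s + θ)) p
        (volume.restrict (Ioo (-1 : ℝ) 0)) ∧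
    MemLp (fun θ => g (t + θ) - g θ) p (volume.restrict (Ioo (-1 : ℝ) 0)) ∧
    ∀ φ : ℝ → ℝ, ContDiff ℝ (⊤ : ℕ∞) φ → tsupport φ ⊆ Ioo (-1 : ℝ) 0 →
      ∫ θ in Ioo (-1 : ℝ) 0, deriv φ θ • (∫ s in Ioo (0 : ℝ) t, g (s + θ))
        = - ∫ θ in Ioo (-1 : ℝ) 0, φ θ • (g (t + θ) - g θ) := by
  haveI hfin0 : IsFiniteMeasure (volume.restrict (Ioo (-1:ℝ) 0)) :=
    ⟨by rw [Measure.restrict_apply_univ]; exact measure_Ioo_lt_top⟩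
  haveI hfint : IsFiniteMeasure (volume.restrict (Ioo (-1:ℝ) t)) :=
    ⟨by rw [Measure.restrict_apply_univ]; exact measure_Ioo_lt_top⟩
  obtain ⟨g', hg'sm, hgg'⟩ := hg.1
  set G : ℝ → E := (Ioo (-1:ℝ) t).indicator g' with hGdef
  have hGsm : StronglyMeasurable G := hg'sm.indicator measurableSet_Ioo
  have hGeq : g =ᵐ[volume.restrict (Ioo (-1:ℝ) t)] G :=
    hgg'.trans (indicator_ae_eq_restrict measurableSet_Ioo).symm
  have hGp : MemLp G p (volume.restrict (Ioo (-1:ℝ) t)) := hg.ae_eq hGeq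
  have hGint : Integrable G volume := by
    rw [hGdef, integrable_indicator_iff measurableSet_Ioo]
    exact (hg.integrable hp).congr hgg'
  have hae : ∀ᵐ x : ℝ, x ∈ Ioo (-1:ℝ) t → g x = G x :=
    (ae_restrict_iff' measurableSet_Ioo).1 hGeq
  -- pointwise equality of the inner integrals on `Ioo (-1) 0`
  have hIeq : ∀ θ ∈ Ioo (-1:ℝ) 0,
      (∫ s in Ioo (0:ℝ) t, g (s + θ)) = ∫ s in Ioo (0:ℝ) t, G (s + θ) := by
    intro θ hθ
    apply setIntegral_congr_ae measurableSet_Ioo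
    filter_upwards [ae_comp_add_right' hae θ] with s hs hsmem
    exact hs ⟨by linarith [hθ.1, hsmem.1], by linarith [hθ.2, hsmem.2]⟩
  have hshift_t : ∀ᵐ θ ∂(volume.restrict (Ioo (-1:ℝ) 0)), g (t + θ) = G (t + θ) := by
    rw [ae_restrict_iff' measurableSet_Ioo]
    filter_upwards [ae_comp_add_left' hae t] with θ hθ hmem
    exact hθ ⟨by linarith [hmem.1], by linarith [hmem.2]⟩
  have hshift_0 : ∀ᵐ θ ∂(volume.restrict (Ioo (-1:ℝ) 0)), g θ = G θ := by
    rw [ae_restrict_iff' measurableSet_Ioo]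
    filter_upwards [hae] with θ hθ hmem
    exact hθ ⟨hmem.1, by linarith [hmem.2]⟩
  -- Part 1
  have hC : ∀ θ : ℝ, ‖∫ s in Ioo (0:ℝ) t, G (s + θ)‖ ≤ ∫ x, ‖G x‖ := by
    intro θ
    have h1 : Integrable (fun s => ‖G (s + θ)‖) volume := (hGint.comp_add_right θ).norm
    calc ‖∫ s in Ioo (0:ℝ) t, G (s + θ)‖ ≤ ∫ s in Ioo (0:ℝ) t, ‖G (s + θ)‖ :=
        norm_integral_le_integral_norm _
      _ ≤ ∫ s, ‖G (s + θ)‖ :=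
        setIntegral_le_integral h1 (Filter.Eventually.of_forall fun s => norm_nonneg _)
      _ = ∫ x, ‖G x‖ := integral_add_right_eq_self (fun x => ‖G x‖) θ
  have hIGcont : Continuous (fun θ : ℝ => ∫ s in Ioo (0:ℝ) t, G (s + θ)) := by
    have hF : Continuous (fun x : ℝ => ∫ u in (0:ℝ)..x, G u) := hGint.continuous_primitive 0
    have hrepr : (fun θ : ℝ => ∫ s in Ioo (0:ℝ) t, G (s + θ))
        = fun θ => (∫ u in (0:ℝ)..(t+θ), G u) - ∫ u in (0:ℝ)..θ, G u := by
      funext θ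
      have e1 : (∫ s in Ioo (0:ℝ) t, G (s + θ)) = ∫ s in (0:ℝ)..t, G (s + θ) := by
        rw [intervalIntegral.integral_of_le ht.le, integral_Ioc_eq_integral_Ioo]
      rw [e1, intervalIntegral.integral_comp_add_right, zero_add]
      rw [← intervalIntegral.integral_interval_sub_left
        hGint.intervalIntegrable hGint.intervalIntegrable]
    rw [hrepr]
    exact (hF.comp (continuous_const.add continuous_id)).sub hF
  have part1G : MemLp (fun θ => ∫ s in Ioo (0:ℝ) t, G (s + θ)) p
      (volume.restrict (Ioo (-1:ℝ) 0)) :=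
    MemLp.of_bound hIGcont.aestronglyMeasurable.restrict _
      (Filter.Eventually.of_forall hC)
  have part1 : MemLp (fun θ => ∫ s in Ioo (0 : ℝ) t, g (s + θ)) p
      (volume.restrict (Ioo (-1 : ℝ) 0)) := by
    apply part1G.ae_eq
    rw [Filter.EventuallyEq, ae_restrict_iff' measurableSet_Ioo]
    exact Filter.Eventually.of_forall fun θ hθ => (hIeq θ hθ).symm
  -- Part 2
  have hsub : Ioo (t-1) t ⊆ Ioo (-1:ℝ) t := fun x hx => ⟨by linarith [hx.1], hx.2⟩
  have hGmem' : MemLp G p (volume.restrict (Ioo (t-1) t)) :=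
    hGp.mono_measure (Measure.restrict_mono hsub le_rfl)
  have hmp : MeasurePreserving (fun θ : ℝ => t + θ)
      (volume.restrict (Ioo (-1:ℝ) 0)) (volume.restrict (Ioo (t-1) t)) := by
    refine ⟨measurable_const_add t, ?_⟩
    have hpre : (fun θ : ℝ => t + θ) ⁻¹' (Ioo (t-1) t) = Ioo (-1:ℝ) 0 := by
      ext x
      simp only [mem_preimage, mem_Ioo]
      constructor
      · rintro ⟨h1, h2⟩; exact ⟨by linarith, by linarith⟩
      · rintro ⟨h1, h2⟩; exact ⟨by linarith, by linarith⟩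
    have h := (measurableEmbedding_addLeft t).restrict_map volume (Ioo (t-1) t)
    rw [map_add_left_eq_self, hpre] at h
    exact h.symm
  have part2G_t : MemLp (fun θ => G (t + θ)) p (volume.restrict (Ioo (-1:ℝ) 0)) :=
    hGmem'.comp_measurePreserving hmp
  have part2G_0 : MemLp G p (volume.restrict (Ioo (-1:ℝ) 0)) :=
    hGp.mono_measure (Measure.restrict_mono (Ioo_subset_Ioo le_rfl ht.le) le_rfl)
  have part2G : MemLp (fun θ => G (t + θ) - G θ) p (volume.restrict (Ioo (-1:ℝ) 0)) :=
    part2G_t.sub part2G_0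
  have part2 : MemLp (fun θ => g (t + θ) - g θ) p (volume.restrict (Ioo (-1 : ℝ) 0)) := by
    apply part2G.ae_eq
    filter_upwards [hshift_t, hshift_0] with θ h1 h2
    rw [h1, h2]
  refine ⟨part1, part2, ?_⟩
  -- Part 3
  intro φ hφ hφsupp
  have hφs : HasCompactSupport φ :=
    IsCompact.of_isClosed_subset isCompact_Icc (isClosed_tsupport φ)
      (hφsupp.trans Ioo_subset_Icc_self)
  have hφ'c : Continuous (deriv φ) := hφ.continuous_deriv (by simp)
  have hφ's : HasCompactSupport (deriv φ) := hφs.deriv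
  have hφzero : ∀ θ : ℝ, θ ∉ Ioo (-1:ℝ) 0 → φ θ = 0 := fun θ hθ =>
    image_eq_zero_of_notMem_tsupport fun hmem => hθ (hφsupp hmem)
  have hφ'zero : ∀ θ : ℝ, θ ∉ Ioo (-1:ℝ) 0 → deriv φ θ = 0 := by
    intro θ hθ
    by_contra h
    exact hθ (hφsupp (support_deriv_subset (Function.mem_support.mpr h)))
  -- LHS
  have hL1 : ∫ θ in Ioo (-1:ℝ) 0, deriv φ θ • (∫ s in Ioo (0:ℝ) t, g (s + θ))
      = ∫ θ in Ioo (-1:ℝ) 0, deriv φ θ • (∫ s in Ioo (0:ℝ) t, G (s + θ)) :=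
    setIntegral_congr_fun measurableSet_Ioo fun θ hθ => by rw [hIeq θ hθ]
  have hL2 : ∫ θ in Ioo (-1:ℝ) 0, deriv φ θ • (∫ s in Ioo (0:ℝ) t, G (s + θ))
      = ∫ θ, deriv φ θ • (∫ s in Ioo (0:ℝ) t, G (s + θ)) :=
    setIntegral_eq_integral_of_forall_compl_eq_zero fun θ hθ => by rw [hφ'zero θ hθ, zero_smul]
  have hL3 : ∫ θ, deriv φ θ • (∫ s in Ioo (0:ℝ) t, G (s + θ))
      = ∫ s in Ioo (0:ℝ) t, (∫ θ, deriv φ θ • G (s + θ)) :=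
    swap_smul t G hGsm hGint (deriv φ) hφ'c hφ's
  have hL4 : ∫ s in Ioo (0:ℝ) t, (∫ θ, deriv φ θ • G (s + θ))
      = ∫ s in (0:ℝ)..t, (∫ θ, deriv φ θ • G (s + θ)) := by
    rw [intervalIntegral.integral_of_le ht.le, integral_Ioc_eq_integral_Ioo]
  have hL5 := conv_ibp t G hGint φ hφ hφs
  -- RHS
  obtain ⟨Cφ, hCφ⟩ := hφs.exists_bound_of_continuous hφ.continuous
  have int_t : Integrable (fun θ => φ θ • G (t + θ)) (volume.restrict (Ioo (-1:ℝ) 0)) := by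
    refine Integrable.mono' (((part2G_t.integrable hp).norm).const_mul Cφ)
      ((hφ.continuous.aestronglyMeasurable.restrict).smul (part2G_t.integrable hp).1)
      (Filter.Eventually.of_forall fun θ => ?_)
    rw [norm_smul]
    exact mul_le_mul_of_nonneg_right (hCφ θ) (norm_nonneg _)
  have int_0 : Integrable (fun θ => φ θ • G θ) (volume.restrict (Ioo (-1:ℝ) 0)) := by
    refine Integrable.mono' (((part2G_0.integrable hp).norm).const_mul Cφ)
      ((hφ.continuous.aestronglyMeasurable.restrict).smul (part2G_0.integrable hp).1)
      (Filter.Eventually.of_forall fun θ => ?_)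
    rw [norm_smul]
    exact mul_le_mul_of_nonneg_right (hCφ θ) (norm_nonneg _)
  have hR1 : ∫ θ in Ioo (-1:ℝ) 0, φ θ • (g (t + θ) - g θ)
      = ∫ θ in Ioo (-1:ℝ) 0, φ θ • (G (t + θ) - G θ) := by
    apply integral_congr_ae
    filter_upwards [hshift_t, hshift_0] with θ h1 h2
    rw [h1, h2]
  have hR2 : ∫ θ in Ioo (-1:ℝ) 0, φ θ • (G (t + θ) - G θ)
      = (∫ θ in Ioo (-1:ℝ) 0, φ θ • G (t + θ)) - ∫ θ in Ioo (-1:ℝ) 0, φ θ • G θ := by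
    simp_rw [smul_sub]
    exact integral_sub int_t int_0
  have hR3 : ∫ θ in Ioo (-1:ℝ) 0, φ θ • G (t + θ) = ∫ θ, φ θ • G (t + θ) :=
    setIntegral_eq_integral_of_forall_compl_eq_zero fun θ hθ => by rw [hφzero θ hθ, zero_smul]
  have hR4 : ∫ θ in Ioo (-1:ℝ) 0, φ θ • G θ = ∫ θ, φ θ • G θ :=
    setIntegral_eq_integral_of_forall_compl_eq_zero fun θ hθ => by rw [hφzero θ hθ, zero_smul]
  rw [hL1, hL2, hL3, hL4, hL5, hR1, hR2, hR3, hR4]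
  abel
end

section
/- Let $E$ be a Banach space, $(S(t))_{t\geq0}$ a $C_0$-semigroup on $E$, and suppose $\eta:[-1,0]\to\mathcal{L}(E)$ has bounded variation with total variation $|\eta|(-1,0)$, and let $\Phi f=\int_{-1}^0 d\eta\, f$ for $f\in C([-1,0];E)$. For $x\in E$ and $g\in L^p(-1,0;E)$ define $\mathcal{S}_s x\in L^p(-1,0;E)$ by $(\mathcal{S}_s x)(\theta)=S(\theta+s)x$ if $\theta\in(-s\vee-1,0)$ and $0$ otherwise, and let $T_l(s)$ be left translation. Then for every $t>0$, $\int_0^t\|\Phi(\mathcal{S}_s x+T_l(s)g)\|_E\,ds\leq |\eta|(-1,0)\Big(\|g\|_{L^p(-1,0;E)}+\int_0^t\|S(s)x\|_E\,ds\Big)$. -/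
open MeasureTheory Set
open scoped ENNReal

/-- Estimate for the Riemann–Stieltjes delay operator applied to orbit segments:
with `Φf = ∫_{-1}^0 (dη)(f(θ))` (modelled as `∫ η(θ)(f θ) dμ` for a finite total
variation measure `μ` and a.e. contractive directions `η(θ)`), and
`w(r) = S(r)x` for `r ≥ 0`, `w(r) = g(r)` for `r < 0`,
`∫₀ᵗ ‖Φ(w(s+·))‖ ds ≤ |η|(-1,0) (‖g‖_{L^p(-1,0;E)} + ∫₀ᵗ ‖S(s)x‖ ds)`. -/
theorem delay_operator_orbit_estimate
    {E : Type*} [NormedAddCommGroup E] [NormedSpace ℝ E] [CompleteSpace E]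
    (t p : ℝ) (ht : 0 < t) (hp : 1 ≤ p)
    (S : ℝ → E →L[ℝ] E)
    (hS0 : S 0 = ContinuousLinearMap.id ℝ E)
    (hSsemi : ∀ a b : ℝ, 0 ≤ a → 0 ≤ b → S (a + b) = (S a).comp (S b))
    (hScont : ∀ y : E, Continuous fun r => S r y)
    (μ : Measure ℝ) [IsFiniteMeasure μ]
    (η : ℝ → E →L[ℝ] E)
    (hηm : ∀ y : E, AEStronglyMeasurable (fun θ => η θ y) (μ.restrict (Icc (-1 : ℝ) 0)))
    (hηbdd : ∀ᵐ θ ∂(μ.restrict (Icc (-1 : ℝ) 0)), ‖η θ‖ ≤ 1)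
    (x : E) (g : ℝ → E) (hgm : AEStronglyMeasurable g (volume.restrict (Ioo (-1 : ℝ) 0)))
    (hg : IntegrableOn (fun θ => ‖g θ‖ ^ p) (Ioo (-1 : ℝ) 0)) :
    ∫ s in Ioo (0 : ℝ) t,
        ‖∫ θ in Icc (-1 : ℝ) 0,
            (η θ) (if 0 ≤ s + θ then S (s + θ) x else g (s + θ)) ∂μ‖
      ≤ (μ (Icc (-1 : ℝ) 0)).toReal *
          ((∫ θ in Ioo (-1 : ℝ) 0, ‖g θ‖ ^ p) ^ (1 / p)
            + ∫ s in Ioo (0 : ℝ) t, ‖S s x‖) := by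
  have hp0 : (0:ℝ) < p := lt_of_lt_of_le one_pos hp
  -- the orbit function
  set w : ℝ → E := fun r => if 0 ≤ r then S r x else g r with hwdef
  have hwkey : ∀ s θ : ℝ, (if 0 ≤ s + θ then S (s + θ) x else g (s + θ)) = w (s + θ) :=
    fun s θ => rfl
  simp only [hwkey]
  set ν := μ.restrict (Icc (-1 : ℝ) 0) with hν
  set W : ℝ → ℝ≥0∞ := fun r => (‖w r‖₊ : ℝ≥0∞) with hWdef
  -- nonnegativity of the RHS
  have hgint_nonneg : 0 ≤ ∫ θ in Ioo (-1:ℝ) 0, ‖g θ‖ ^ p :=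
    integral_nonneg fun θ => Real.rpow_nonneg (norm_nonneg _) _
  have hRHS0 : 0 ≤ (μ (Icc (-1:ℝ) 0)).toReal *
      ((∫ θ in Ioo (-1:ℝ) 0, ‖g θ‖ ^ p) ^ (1/p) + ∫ s in Ioo (0:ℝ) t, ‖S s x‖) :=
    mul_nonneg ENNReal.toReal_nonneg
      (add_nonneg (Real.rpow_nonneg hgint_nonneg _) (integral_nonneg fun s => norm_nonneg _))
  by_cases hfi : Integrable (fun s => ‖∫ θ in Icc (-1:ℝ) 0, (η θ) (w (s + θ)) ∂μ‖)
      (volume.restrict (Ioo (0:ℝ) t))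
  swap
  · rw [integral_undef hfi]; exact hRHS0
  rw [integral_eq_lintegral_of_nonneg_ae (ae_of_all _ fun s => norm_nonneg _)
    hfi.aestronglyMeasurable]
  refine ENNReal.toReal_le_of_le_ofReal hRHS0 ?_
  -- pointwise bound by the lintegral of `W`
  have step1 : ∀ s : ℝ, ENNReal.ofReal ‖∫ θ in Icc (-1:ℝ) 0, (η θ) (w (s + θ)) ∂μ‖
      ≤ ∫⁻ θ, W (s + θ) ∂ν := by
    intro s
    rw [ofReal_norm]
    refine (enorm_integral_le_lintegral_enorm _).trans ?_
    refine lintegral_mono_ae (hηbdd.mono fun θ hθ => ?_)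
    have hb : ‖(η θ) (w (s + θ))‖ ≤ ‖w (s + θ)‖ := by
      refine ((η θ).le_opNorm _).trans ?_
      calc ‖η θ‖ * ‖w (s + θ)‖ ≤ 1 * ‖w (s + θ)‖ :=
            mul_le_mul_of_nonneg_right hθ (norm_nonneg _)
        _ = ‖w (s + θ)‖ := one_mul _
    exact ENNReal.coe_le_coe.2 (by exact_mod_cast hb)
  -- the pieces of the bound
  set A : ℝ≥0∞ := ∫⁻ r in Ioo (-1:ℝ) 0, (‖g r‖₊ : ℝ≥0∞) with hAdef
  set B : ℝ≥0∞ := ∫⁻ r in Ico (0:ℝ) t, (‖S r x‖₊ : ℝ≥0∞) with hBdef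
  -- the change of variables bound, for each fixed θ ∈ [-1,0]
  have step3 : ∀ θ ∈ Icc (-1:ℝ) 0, (∫⁻ s in Ioo (0:ℝ) t, W (s + θ)) ≤ A + B := by
    intro θ hθ
    have h1 : (∫⁻ s in Ioo (0:ℝ) t, W (s + θ))
        = ∫⁻ s, (Ioo (0:ℝ) t).indicator (fun s => W (s + θ)) s :=
      (lintegral_indicator measurableSet_Ioo _).symm
    have h2 : ∀ s : ℝ, (Ioo (0:ℝ) t).indicator (fun s => W (s + θ)) s
        = (Ioo θ (t + θ)).indicator W (s + θ) := by
      intro s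
      by_cases hs : s ∈ Ioo (0:ℝ) t
      · rw [indicator_of_mem hs, indicator_of_mem]
        exact ⟨by linarith [hs.1], by linarith [hs.2]⟩
      · rw [indicator_of_notMem hs, indicator_of_notMem]
        intro hmem
        exact hs ⟨by linarith [hmem.1], by linarith [hmem.2]⟩
    calc (∫⁻ s in Ioo (0:ℝ) t, W (s + θ))
        = ∫⁻ s, (Ioo θ (t + θ)).indicator W (s + θ) := by rw [h1]; simp_rw [h2]
      _ = ∫⁻ r, (Ioo θ (t + θ)).indicator W r :=
          lintegral_add_right_eq_self (fun r => (Ioo θ (t + θ)).indicator W r) θ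
      _ = ∫⁻ r in Ioo θ (t + θ), W r := lintegral_indicator measurableSet_Ioo _
      _ ≤ ∫⁻ r in Ioo (-1:ℝ) 0 ∪ Ico (0:ℝ) t, W r := by
          refine lintegral_mono_set fun r hr => ?_
          rcases lt_or_ge r 0 with h | h
          · exact Or.inl ⟨lt_of_le_of_lt hθ.1 hr.1, h⟩
          · exact Or.inr ⟨h, lt_of_lt_of_le hr.2 (by linarith [hθ.2])⟩
      _ = (∫⁻ r in Ioo (-1:ℝ) 0, W r) + ∫⁻ r in Ico (0:ℝ) t, W r := by
          refine lintegral_union measurableSet_Ico ?_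
          exact Set.disjoint_left.2 fun r hr hr' => absurd hr'.1 (not_le.2 hr.2)
      _ = A + B := by
          congr 1
          · refine setLIntegral_congr_fun measurableSet_Ioo (fun r hr => ?_)
            simp only [hWdef, hwdef, if_neg (not_le.2 hr.2)]
          · refine setLIntegral_congr_fun measurableSet_Ico (fun r hr => ?_)
            simp only [hWdef, hwdef, if_pos hr.1]
  -- joint a.e.-measurability for Fubini
  set P := (volume.restrict (Ioo (0:ℝ) t)).prod ν with hPdef
  have hmeas : AEMeasurable (fun z : ℝ × ℝ => W (z.1 + z.2)) P := by
    set g' := hgm.mk g with hg'def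
    set W' : ℝ → ℝ≥0∞ := fun r => (‖if 0 ≤ r then S r x else g' r‖₊ : ℝ≥0∞) with hW'def
    have hW'm : Measurable W' := by
      have : StronglyMeasurable fun r : ℝ => if 0 ≤ r then S r x else g' r :=
        StronglyMeasurable.ite measurableSet_Ici (hScont x).stronglyMeasurable
          hgm.stronglyMeasurable_mk
      exact this.enorm
    have hWm' : Measurable fun z : ℝ × ℝ => W' (z.1 + z.2) :=
      hW'm.comp measurable_add
    -- null set where g and g' differ
    have hT : (volume.restrict (Ioo (-1:ℝ) 0)) {r | g r ≠ g' r} = 0 := hgm.ae_eq_mk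
    set N₀ := toMeasurable (volume.restrict (Ioo (-1:ℝ) 0)) {r | g r ≠ g' r} ∩ Ioo (-1:ℝ) 0
      with hN₀def
    have hN₀meas : MeasurableSet N₀ :=
      (measurableSet_toMeasurable _ _).inter measurableSet_Ioo
    have hN₀null : volume N₀ = 0 := by
      have h := measure_toMeasurable (μ := volume.restrict (Ioo (-1:ℝ) 0)) {r | g r ≠ g' r}
      rw [hT] at h
      rw [hN₀def, ← Measure.restrict_apply (measurableSet_toMeasurable _ _)]
      exact h
    have hsub : ∀ r ∈ Ioo (-1:ℝ) 0, g r ≠ g' r → r ∈ N₀ :=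
      fun r hr h => ⟨subset_toMeasurable _ _ h, hr⟩
    -- the bad set is P-null
    have hbad : P {z : ℝ × ℝ | z.1 + z.2 ∈ N₀} = 0 := by
      have hAset : MeasurableSet {z : ℝ × ℝ | z.1 + z.2 ∈ N₀} :=
        (measurable_fst.add measurable_snd) hN₀meas
      rw [hPdef, Measure.prod_apply_symm hAset]
      have hinner : ∀ θ : ℝ,
          (volume.restrict (Ioo (0:ℝ) t)) ((fun s => (s, θ)) ⁻¹' {z : ℝ × ℝ | z.1 + z.2 ∈ N₀})
            = 0 := by
        intro θ
        have he : ((fun s => (s, θ)) ⁻¹' {z : ℝ × ℝ | z.1 + z.2 ∈ N₀})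
            = (fun s => s + θ) ⁻¹' N₀ := rfl
        rw [he, Measure.restrict_apply (hN₀meas.preimage (measurable_add_const θ))]
        refine measure_mono_null inter_subset_left ?_
        rw [measure_preimage_add_right]
        exact hN₀null
      simp only [hinner, lintegral_zero]
    -- a.e. facts about the product measure
    have h1 : ∀ᵐ z : ℝ × ℝ ∂P, z.1 ∈ Ioo (0:ℝ) t := by
      rw [ae_iff]
      refine measure_mono_null (t := (Ioo (0:ℝ) t)ᶜ ×ˢ (univ : Set ℝ)) (fun z hz => ?_) ?_
      · exact Set.mem_prod.2 ⟨hz, mem_univ z.2⟩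
      · rw [hPdef, Measure.prod_prod, Measure.restrict_apply measurableSet_Ioo.compl]
        simp
    have h2 : ∀ᵐ z : ℝ × ℝ ∂P, z.2 ∈ Icc (-1:ℝ) 0 := by
      rw [ae_iff]
      refine measure_mono_null (t := (univ : Set ℝ) ×ˢ (Icc (-1:ℝ) 0)ᶜ) (fun z hz => ?_) ?_
      · exact Set.mem_prod.2 ⟨mem_univ z.1, hz⟩
      · rw [hPdef, Measure.prod_prod, hν, Measure.restrict_apply measurableSet_Icc.compl]
        simp
    have h3 : ∀ᵐ z : ℝ × ℝ ∂P, z.1 + z.2 ∉ N₀ := by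
      rw [ae_iff]
      simpa only [not_not] using hbad
    refine hWm'.aemeasurable.congr ?_
    filter_upwards [h1, h2, h3] with z hz1 hz2 hz3
    by_cases hr : 0 ≤ z.1 + z.2
    · simp only [hW'def, hWdef, hwdef, if_pos hr]
    · have hrIoo : z.1 + z.2 ∈ Ioo (-1:ℝ) 0 :=
        ⟨by linarith [hz1.1, hz2.1], lt_of_not_ge hr⟩
      have hgg : g (z.1 + z.2) = g' (z.1 + z.2) := by
        by_contra hne; exact hz3 (hsub _ hrIoo hne)
      simp only [hW'def, hWdef, hwdef, if_neg hr, hgg]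
  have hfub : (∫⁻ s in Ioo (0:ℝ) t, ∫⁻ θ, W (s + θ) ∂ν)
      = ∫⁻ θ, (∫⁻ s in Ioo (0:ℝ) t, W (s + θ)) ∂ν :=
    by exact lintegral_lintegral_swap (μ := volume.restrict (Ioo (0:ℝ) t)) (ν := ν) (f := fun s θ => W (s + θ)) hmeas
  -- bounds for the two pieces
  haveI hprob : IsProbabilityMeasure (volume.restrict (Ioo (-1:ℝ) 0)) := by
    constructor
    rw [Measure.restrict_apply_univ, Real.volume_Ioo]
    norm_num
  have hA : A ≤ ENNReal.ofReal ((∫ θ in Ioo (-1:ℝ) 0, ‖g θ‖ ^ p) ^ (1/p)) := by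
    have e1 : A = eLpNorm g 1 (volume.restrict (Ioo (-1:ℝ) 0)) :=
      (eLpNorm_one_eq_lintegral_enorm (f := g) (μ := volume.restrict (Ioo (-1:ℝ) 0))).symm
    have e2 : eLpNorm g 1 (volume.restrict (Ioo (-1:ℝ) 0))
        ≤ eLpNorm g (ENNReal.ofReal p) (volume.restrict (Ioo (-1:ℝ) 0)) :=
      eLpNorm_le_eLpNorm_of_exponent_le (ENNReal.one_le_ofReal.2 hp) hgm
    have e3 : eLpNorm g (ENNReal.ofReal p) (volume.restrict (Ioo (-1:ℝ) 0))
        = (∫⁻ θ in Ioo (-1:ℝ) 0, (‖g θ‖₊ : ℝ≥0∞) ^ p) ^ (1/p) := by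
      simp only [eLpNorm_eq_lintegral_rpow_enorm_toReal (ENNReal.ofReal_pos.2 hp0).ne' ENNReal.ofReal_ne_top,
        ENNReal.toReal_ofReal hp0.le, enorm_eq_nnnorm]
    have e4 : (∫⁻ θ in Ioo (-1:ℝ) 0, (‖g θ‖₊ : ℝ≥0∞) ^ p)
        = ENNReal.ofReal (∫ θ in Ioo (-1:ℝ) 0, ‖g θ‖ ^ p) := by
      rw [ofReal_integral_eq_lintegral_ofReal hg
        (ae_of_all _ fun θ => Real.rpow_nonneg (norm_nonneg _) _)]
      refine lintegral_congr fun θ => ?_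
      rw [← enorm_eq_nnnorm, ← ofReal_norm, ENNReal.ofReal_rpow_of_nonneg (norm_nonneg _) hp0.le]
    calc A ≤ eLpNorm g (ENNReal.ofReal p) (volume.restrict (Ioo (-1:ℝ) 0)) := e1 ▸ e2
      _ = (ENNReal.ofReal (∫ θ in Ioo (-1:ℝ) 0, ‖g θ‖ ^ p)) ^ (1/p) := by rw [e3, e4]
      _ = ENNReal.ofReal ((∫ θ in Ioo (-1:ℝ) 0, ‖g θ‖ ^ p) ^ (1/p)) :=
          ENNReal.ofReal_rpow_of_nonneg hgint_nonneg (by positivity)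
  have hSint : IntegrableOn (fun r => ‖S r x‖) (Ioo (0:ℝ) t) :=
    ((hScont x).norm.integrableOn_Icc).mono_set Ioo_subset_Icc_self
  have hB : B = ENNReal.ofReal (∫ s in Ioo (0:ℝ) t, ‖S s x‖) := by
    calc B = ∫⁻ r in Ioo (0:ℝ) t, (‖S r x‖₊ : ℝ≥0∞) :=
          (setLIntegral_congr Ioo_ae_eq_Ico).symm
      _ = ∫⁻ r in Ioo (0:ℝ) t, ENNReal.ofReal ‖S r x‖ :=
          lintegral_congr fun r => (ofReal_norm _).symm
      _ = ENNReal.ofReal (∫ s in Ioo (0:ℝ) t, ‖S s x‖) :=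
          (ofReal_integral_eq_lintegral_ofReal hSint (ae_of_all _ fun s => norm_nonneg _)).symm
  -- put everything together
  calc ∫⁻ s in Ioo (0:ℝ) t,
        ENNReal.ofReal ‖∫ θ in Icc (-1:ℝ) 0, (η θ) (w (s + θ)) ∂μ‖
      ≤ ∫⁻ s in Ioo (0:ℝ) t, ∫⁻ θ, W (s + θ) ∂ν := lintegral_mono step1
    _ = ∫⁻ θ, (∫⁻ s in Ioo (0:ℝ) t, W (s + θ)) ∂ν := hfub
    _ ≤ ∫⁻ _, (A + B) ∂ν :=
        by exact lintegral_mono_ae (μ := ν) ((ae_restrict_mem (μ := μ) measurableSet_Icc).mono step3)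
    _ = (A + B) * ν univ := lintegral_const _
    _ = μ (Icc (-1:ℝ) 0) * (A + B) := by
        rw [hν, Measure.restrict_apply_univ, mul_comm]
    _ ≤ μ (Icc (-1:ℝ) 0) *
        (ENNReal.ofReal ((∫ θ in Ioo (-1:ℝ) 0, ‖g θ‖ ^ p) ^ (1/p))
          + ENNReal.ofReal (∫ s in Ioo (0:ℝ) t, ‖S s x‖)) :=
        mul_le_mul_right (add_le_add hA hB.le) _
    _ = ENNReal.ofReal ((μ (Icc (-1:ℝ) 0)).toReal *
          ((∫ θ in Ioo (-1:ℝ) 0, ‖g θ‖ ^ p) ^ (1/p) + ∫ s in Ioo (0:ℝ) t, ‖S s x‖)) := by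
        rw [ENNReal.ofReal_mul ENNReal.toReal_nonneg,
          ENNReal.ofReal_toReal (measure_ne_top μ _),
          ENNReal.ofReal_add (Real.rpow_nonneg hgint_nonneg _)
            (integral_nonneg fun s => norm_nonneg _)]
end
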